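/- arXiv:1801.08876 — 2 statements merged into one kernel-verified Lean document; each statement's English description precedes it below -/
import Mathlib

section
/- There exist a real constant c > 0 and an integer K such that for every integer k ≥ K there is a finite graph G_k whose edge set admits a partition into locally k-irregular parts, while every partition of E(G_k) into locally k-irregular parts has at least c·k² parts; that is, h(k) = Ω(k²). -/
/-!
Take an `r × r` board with `r = ⌊k/2⌋`, with one point and one line for each cell. A point lies
on a line when the two cells share a row or a column, so any two lines `(a, b)` and `(a', b')`
meet in the point `(a, b')`. Points then have degree `2r - 1 ≤ k`. Hang pendant leaves on each
line so that its degree becomes `k + 1`. The stars at the lines give a decomposition into `r²`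
locally `k`-irregular parts. Conversely, in any such decomposition the part containing a pendant
edge of a line must contain the whole star of that line, because the line needs degree at least
`k + 1` there. If two lines were in the same part, their common point would have degree between
`2` and `k` in that part, next to a line of degree `k + 1`. So the `r² ≥ k²/16` lines lie in
distinct parts.
-/

open SimpleGraph

variable {V : Type*}

/-- The degree of a vertex `v` in an edge part `E`: the number of edges of `E` incident to `v`. -/
noncomputable def partDeg (E : Set (Sym2 V)) (v : V) : ℕ :=
  {e ∈ E | v ∈ e}.ncard

/-- A part is a matching if no two of its edges share a vertex. -/
def IsMatchingPart (E : Set (Sym2 V)) : Prop :=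
  ∀ e ∈ E, ∀ f ∈ E, e ≠ f → ∀ v : V, v ∈ e → v ∉ f

/-- A part is locally irregular if the endpoints of each of its edges have distinct degrees. -/
def IsLocallyIrregularPart (E : Set (Sym2 V)) : Prop :=
  ∀ u v : V, s(u, v) ∈ E → partDeg E u ≠ partDeg E v

/-- A part is locally regular if the endpoints of each of its edges have equal degrees. -/
def IsLocallyRegularPart (E : Set (Sym2 V)) : Prop :=
  ∀ u v : V, s(u, v) ∈ E → partDeg E u = partDeg E v

/-- A part is regular if all vertices incident to one of its edges have the same degree `r ≥ 1`. -/
def IsRegularPart (E : Set (Sym2 V)) : Prop :=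
  ∃ r : ℕ, 1 ≤ r ∧ ∀ v : V, (∃ e ∈ E, v ∈ e) → partDeg E v = r

/-- A part is `r`-regular if every vertex incident to one of its edges has degree `r` in it. -/
def IsRegularPartOfDeg (r : ℕ) (E : Set (Sym2 V)) : Prop :=
  ∀ v : V, (∃ e ∈ E, v ∈ e) → partDeg E v = r

/-- A part is locally `k`-irregular if endpoint degrees of each edge differ by at least `k`. -/
def IsLocallyKIrregularPart (k : ℕ) (E : Set (Sym2 V)) : Prop :=
  ∀ u v : V, s(u, v) ∈ E → (k : ℤ) ≤ |(partDeg E u : ℤ) - (partDeg E v : ℤ)|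

/-- The maximum degree of a finite graph. -/
noncomputable def maxDeg [Fintype V] (G : SimpleGraph V) : ℕ :=
  Finset.univ.sup fun v => partDeg G.edgeSet v

section PartDeg

variable {α β : Type*}

lemma partDeg_edgeSet (G : SimpleGraph α) (v : α) :
    partDeg G.edgeSet v = (G.neighborSet v).ncard := by
  classical
  rw [partDeg, ← Nat.card_coe_set_eq, ← Nat.card_coe_set_eq]
  exact Nat.card_congr (G.incidenceSetEquivNeighborSet v)

lemma partDeg_mono [Finite α] {E F : Set (Sym2 α)} (h : E ⊆ F) (v : α) :
    partDeg E v ≤ partDeg F v :=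
  Set.ncard_le_ncard (fun _ he => ⟨h he.1, he.2⟩) (Set.toFinite _)

lemma one_le_partDeg [Finite α] {E : Set (Sym2 α)} {v : α} {e : Sym2 α}
    (he : e ∈ E) (hv : v ∈ e) : 1 ≤ partDeg E v :=
  (Set.ncard_pos (Set.toFinite _)).2 ⟨e, he, hv⟩

lemma two_le_partDeg [Finite α] {E : Set (Sym2 α)} {v : α} {e f : Sym2 α}
    (he : e ∈ E) (hve : v ∈ e) (hf : f ∈ E) (hvf : v ∈ f) (hef : e ≠ f) :
    2 ≤ partDeg E v :=
  (Set.one_lt_ncard (Set.toFinite _)).2 ⟨e, ⟨he, hve⟩, f, ⟨hf, hvf⟩, hef⟩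

lemma partDeg_image {f : α → β} (hf : Function.Injective f) (E : Set (Sym2 α)) (v : α) :
    partDeg (Sym2.map f '' E) (f v) = partDeg E v := by
  have : {e ∈ Sym2.map f '' E | f v ∈ e} = Sym2.map f '' {e ∈ E | v ∈ e} := by
    ext e
    constructor
    · rintro ⟨⟨g, hg, rfl⟩, hv⟩
      obtain ⟨a, ha, hav⟩ := Sym2.mem_map.1 hv
      exact ⟨g, ⟨hg, hf hav ▸ ha⟩, rfl⟩
    · rintro ⟨g, ⟨hg, hv⟩, rfl⟩
      exact ⟨⟨g, hg, rfl⟩, Sym2.mem_map.2 ⟨v, hv, rfl⟩⟩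
  rw [partDeg, this, Set.ncard_image_of_injective _ (Sym2.map.injective hf), partDeg]

lemma partDeg_incidenceSet_self (G : SimpleGraph α) (v : α) :
    partDeg (G.incidenceSet v) v = partDeg G.edgeSet v := by
  rw [partDeg, Set.sep_eq_self_iff_mem_true.2 fun _ he => he.2]
  rfl

lemma partDeg_incidenceSet_of_adj {G : SimpleGraph α} {v w : α} (h : G.Adj v w) :
    partDeg (G.incidenceSet v) w = 1 := by
  have : {e ∈ G.incidenceSet v | w ∈ e} = {s(v, w)} := by
    ext e
    constructor
    · rintro ⟨⟨-, hv⟩, hw⟩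
      exact (Sym2.mem_and_mem_iff h.ne).1 ⟨hv, hw⟩
    · rintro rfl
      exact ⟨G.mk'_mem_incidenceSet_left_iff.2 h, Sym2.mem_mk_right _ _⟩
  rw [partDeg, this, Set.ncard_singleton]

lemma incidenceSet_subset_of_partDeg_le [Finite α] {G : SimpleGraph α} {E : Set (Sym2 α)}
    (hE : E ⊆ G.edgeSet) {v : α} (hdeg : partDeg G.edgeSet v ≤ partDeg E v) :
    G.incidenceSet v ⊆ E := by
  have hsub : {e ∈ E | v ∈ e} ⊆ G.incidenceSet v := fun _ he => ⟨hE he.1, he.2⟩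
  have := Set.eq_of_subset_of_ncard_le hsub hdeg (Set.toFinite _)
  exact this ▸ Set.sep_subset E _

end PartDeg

section Decomposition

variable {α β ι : Type*}

lemma IsLocallyKIrregularPart.image {k : ℕ} {E : Set (Sym2 α)}
    (h : IsLocallyKIrregularPart k E) {f : α → β} (hf : Function.Injective f) :
    IsLocallyKIrregularPart k (Sym2.map f '' E) := by
  rintro u v ⟨e, he, hfe⟩
  induction e with
  | _ x y =>
    rw [Sym2.map_mk, Sym2.eq_iff] at hfe
    rcases hfe with ⟨rfl, rfl⟩ | ⟨rfl, rfl⟩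
    · rw [partDeg_image hf, partDeg_image hf]
      exact h x y he
    · rw [partDeg_image hf, partDeg_image hf, abs_sub_comm]
      exact h x y he

lemma SimpleGraph.Iso.image_edgeSet {G : SimpleGraph α} {H : SimpleGraph β} (φ : G ≃g H) :
    Sym2.map φ '' G.edgeSet = H.edgeSet := by
  rw [Set.image_eq_preimage_of_inverse (g := Sym2.map φ.symm) (fun e => by simp [Sym2.map_map])
    (fun e => by simp [Sym2.map_map])]
  exact Set.ext fun e => φ.symm.map_mem_edgeSet_iff

structure IsKIrregularDecomposition (k : ℕ) (G : SimpleGraph α) (P : ι → Set (Sym2 α)) :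
    Prop where
  iUnion_eq : (⋃ i, P i) = G.edgeSet
  pairwise_disjoint : ∀ i j, i ≠ j → Disjoint (P i) (P j)
  isLocallyKIrregularPart : ∀ i, IsLocallyKIrregularPart k (P i)

lemma IsKIrregularDecomposition.map {k : ℕ} {G : SimpleGraph α} {H : SimpleGraph β}
    {P : ι → Set (Sym2 α)} (h : IsKIrregularDecomposition k G P) (φ : G ≃g H) :
    IsKIrregularDecomposition k H fun i => Sym2.map φ '' P i where
  iUnion_eq := by rw [← Set.image_iUnion, h.iUnion_eq, φ.image_edgeSet]
  pairwise_disjoint i j hij :=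
    (Set.disjoint_image_iff (Sym2.map.injective φ.injective)).2 (h.pairwise_disjoint i j hij)
  isLocallyKIrregularPart i := (h.isLocallyKIrregularPart i).image φ.injective

end Decomposition

section Stars

variable {α ι κ : Type*} {k : ℕ} {G : SimpleGraph α}

lemma isKIrregularDecomposition_incidenceSet (v : ι → α) (hv : Function.Injective v)
    (hindep : ∀ i j, ¬G.Adj (v i) (v j)) (hcover : ∀ x y, G.Adj x y → ∃ i, v i = x ∨ v i = y)
    (hdeg : ∀ i, k + 1 ≤ partDeg G.edgeSet (v i)) :
    IsKIrregularDecomposition k G fun i => G.incidenceSet (v i) where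
  iUnion_eq := by
    refine (Set.iUnion_subset fun i => G.incidenceSet_subset _).antisymm fun e he => ?_
    induction e with
    | _ x y =>
      obtain ⟨i, hi⟩ := hcover x y he
      exact Set.mem_iUnion.2 ⟨i, he, by rcases hi with rfl | rfl <;> simp⟩
  pairwise_disjoint i j hij := by
    refine Set.disjoint_left.2 fun e hei hej => hindep i j ?_
    obtain rfl := G.incidenceSet_inter_incidenceSet_subset (hv.ne hij) ⟨hei, hej⟩
    exact hei.1
  isLocallyKIrregularPart i := by
    have hstar : ∀ w, G.Adj (v i) w →
        (k : ℤ) ≤ |(partDeg (G.incidenceSet (v i)) (v i) : ℤ) -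
          partDeg (G.incidenceSet (v i)) w| := fun w hw => by
      rw [partDeg_incidenceSet_self, partDeg_incidenceSet_of_adj hw, le_abs']
      have := hdeg i
      omega
    intro x y hxy
    obtain ⟨hxy, rfl | rfl⟩ := G.mk'_mem_incidenceSet_iff.1 hxy
    · exact hstar y hxy
    · exact abs_sub_comm (α := ℤ) _ _ ▸ hstar x hxy.symm

variable [Finite α] {E : Set (Sym2 α)}

lemma IsLocallyKIrregularPart.incidenceSet_subset_of_pendant
    (hE : IsLocallyKIrregularPart k E) (hEG : E ⊆ G.edgeSet) {v w : α} (hvw : s(v, w) ∈ E)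
    (hw : partDeg G.edgeSet w ≤ 1) (hv : partDeg G.edgeSet v ≤ k + 1) :
    G.incidenceSet v ⊆ E := by
  have hw1 : partDeg E w = 1 :=
    ((partDeg_mono hEG w).trans hw).antisymm (one_le_partDeg hvw (Sym2.mem_mk_right v w))
  have hv1 := one_le_partDeg hvw (Sym2.mem_mk_left v w)
  have hirr := hE v w hvw
  rw [hw1, le_abs'] at hirr
  exact incidenceSet_subset_of_partDeg_le hEG (by omega)

lemma IsLocallyKIrregularPart.eq_of_incidenceSet_subset (hE : IsLocallyKIrregularPart k E)
    (hEG : E ⊆ G.edgeSet) {v w p : α} (hv : G.incidenceSet v ⊆ E) (hw : G.incidenceSet w ⊆ E)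
    (hvp : G.Adj v p) (hwp : G.Adj w p) (hvdeg : partDeg G.edgeSet v ≤ k + 1)
    (hpdeg : partDeg G.edgeSet p ≤ k) : v = w := by
  by_contra hne
  have hvpE : s(v, p) ∈ E := hv (G.mk'_mem_incidenceSet_left_iff.2 hvp)
  have hwpE : s(w, p) ∈ E := hw (G.mk'_mem_incidenceSet_left_iff.2 hwp)
  have hp2 := two_le_partDeg hvpE (Sym2.mem_mk_right v p) hwpE (Sym2.mem_mk_right w p)
    fun h => hne (Sym2.congr_left.1 h)
  have hpk := (partDeg_mono hEG p).trans hpdeg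
  have hvk := (partDeg_mono hEG v).trans hvdeg
  have hv1 := one_le_partDeg hvpE (Sym2.mem_mk_left v p)
  have hirr := hE v p hvpE
  rw [le_abs'] at hirr
  omega

theorem card_le_card_of_isLocallyKIrregularPart_cover [Finite ι] (v : κ → α)
    (hv : Function.Injective v) (hdeg : ∀ i, partDeg G.edgeSet (v i) ≤ k + 1)
    (hpendant : ∀ i, ∃ w, G.Adj (v i) w ∧ partDeg G.edgeSet w ≤ 1)
    (hcommon : Pairwise fun i j => ∃ p, G.Adj (v i) p ∧ G.Adj (v j) p ∧ partDeg G.edgeSet p ≤ k)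
    {P : ι → Set (Sym2 α)} (hU : (⋃ i, P i) = G.edgeSet)
    (hI : ∀ i, IsLocallyKIrregularPart k (P i)) : Nat.card κ ≤ Nat.card ι := by
  have hPG : ∀ i, P i ⊆ G.edgeSet := fun i => hU ▸ Set.subset_iUnion P i
  choose w hw hwdeg using hpendant
  have hpart : ∀ i, ∃ j, s(v i, w i) ∈ P j := fun i =>
    Set.mem_iUnion.1 (hU ▸ (G.mem_edgeSet.2 (hw i)) : s(v i, w i) ∈ ⋃ j, P j)
  choose f hf using hpart
  have hstar : ∀ i, G.incidenceSet (v i) ⊆ P (f i) := fun i =>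
    (hI (f i)).incidenceSet_subset_of_pendant (hPG (f i)) (hf i) (hwdeg i) (hdeg i)
  refine Nat.card_le_card_of_injective f fun i j hij => ?_
  by_contra hne
  obtain ⟨p, hip, hjp, hp⟩ := hcommon hne
  exact hne (hv ((hI (f i)).eq_of_incidenceSet_subset (hPG (f i)) (hstar i) (hij ▸ hstar j)
    hip hjp (hdeg i) hp))

end Stars

section IncidenceGraphWithLeaves

variable {P L : Type*} (I : P → L → Prop) (n : ℕ)

/-- Points `inl p`, lines `inr (inl l)` and, hanging from each line `l`, the leaves
`inr (inr (l, j))` for `j < n`; a point is joined to the lines it lies on. -/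
def incidenceGraphWithLeaves : SimpleGraph (P ⊕ L ⊕ L × Fin n) where
  Adj
    | .inl p, .inr (.inl l) | .inr (.inl l), .inl p => I p l
    | .inr (.inl l), .inr (.inr (l', _)) | .inr (.inr (l', _)), .inr (.inl l) => l = l'
    | _, _ => False
  symm := ⟨by rintro (p | l | ⟨l, j⟩) (p' | l' | ⟨l', j'⟩) h <;> exact h⟩
  loopless := ⟨by rintro (p | l | ⟨l, j⟩) h <;> exact h⟩

namespace incidenceGraphWithLeaves

variable {I n}

lemma neighborSet_inl (p : P) :
    (incidenceGraphWithLeaves I n).neighborSet (.inl p) = (Sum.inr ∘ Sum.inl) '' {l | I p l} := by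
  ext (p' | l | ⟨l, j⟩) <;> simp [incidenceGraphWithLeaves]

lemma neighborSet_inr_inl (l : L) :
    (incidenceGraphWithLeaves I n).neighborSet (.inr (.inl l)) =
      Sum.inl '' {p | I p l} ∪ Set.range fun j => .inr (.inr (l, j)) := by
  ext (p | l' | ⟨l', j⟩) <;> simp [incidenceGraphWithLeaves, eq_comm]

lemma neighborSet_inr_inr (l : L) (j : Fin n) :
    (incidenceGraphWithLeaves I n).neighborSet (.inr (.inr (l, j))) = {.inr (.inl l)} := by
  ext (p | l' | ⟨l', j'⟩) <;> simp [incidenceGraphWithLeaves, eq_comm]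

lemma partDeg_inl (p : P) :
    partDeg (incidenceGraphWithLeaves I n).edgeSet (.inl p) = {l | I p l}.ncard := by
  rw [partDeg_edgeSet, neighborSet_inl,
    Set.ncard_image_of_injective _ (Sum.inr_injective.comp Sum.inl_injective)]

lemma partDeg_inr_inl [Finite P] (l : L) :
    partDeg (incidenceGraphWithLeaves I n).edgeSet (.inr (.inl l)) = {p | I p l}.ncard + n := by
  have hdisj : Disjoint (Sum.inl '' {p | I p l})
      (Set.range fun j : Fin n => (.inr (.inr (l, j)) : P ⊕ L ⊕ L × Fin n)) := by
    simp [Set.disjoint_left]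
  rw [partDeg_edgeSet, neighborSet_inr_inl, Set.ncard_union_eq hdisj,
    Set.ncard_image_of_injective _ Sum.inl_injective, Set.ncard_range_of_injective, Nat.card_fin]
  intro j j' h
  simpa using h

lemma partDeg_inr_inr (l : L) (j : Fin n) :
    partDeg (incidenceGraphWithLeaves I n).edgeSet (.inr (.inr (l, j))) = 1 := by
  rw [partDeg_edgeSet, neighborSet_inr_inr, Set.ncard_singleton]

lemma not_adj_inr_inl (l l' : L) :
    ¬(incidenceGraphWithLeaves I n).Adj (.inr (.inl l)) (.inr (.inl l')) :=
  id

lemma exists_inr_inl_of_adj {x y : P ⊕ L ⊕ L × Fin n}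
    (h : (incidenceGraphWithLeaves I n).Adj x y) :
    ∃ l, .inr (.inl l) = x ∨ .inr (.inl l) = y := by
  rcases x with p | l | ⟨l, j⟩ <;> rcases y with p' | l' | ⟨l', j'⟩ <;>
    first | exact ⟨_, .inl rfl⟩ | exact ⟨_, .inr rfl⟩ | exact h.elim

end incidenceGraphWithLeaves

end IncidenceGraphWithLeaves

section Rook

variable {k r : ℕ}

def rookIncidence (r : ℕ) (p l : Fin r × Fin r) : Prop :=
  p.1 = l.1 ∨ p.2 = l.2

lemma ncard_setOf_fst_eq_or_snd_eq (a b : Fin r) :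
    {q : Fin r × Fin r | q.1 = a ∨ q.2 = b}.ncard = 2 * r - 1 := by
  have h := Set.ncard_union_add_ncard_inter {q : Fin r × Fin r | q.1 = a} {q | q.2 = b}
  have hrow : {q : Fin r × Fin r | q.1 = a}.ncard = r := by
    rw [show {q : Fin r × Fin r | q.1 = a} = {a} ×ˢ Set.univ by ext; simp, Set.ncard_prod]
    simp
  have hcol : {q : Fin r × Fin r | q.2 = b}.ncard = r := by
    rw [show {q : Fin r × Fin r | q.2 = b} = Set.univ ×ˢ {b} by ext; simp, Set.ncard_prod]
    simp
  have hcell : ({q : Fin r × Fin r | q.1 = a} ∩ {q | q.2 = b}).ncard = 1 := by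
    rw [show {q : Fin r × Fin r | q.1 = a} ∩ {q | q.2 = b} = {(a, b)} by ext ⟨x, y⟩; simp]
    exact Set.ncard_singleton _
  rw [Set.ofPred_or]
  omega

abbrev rookGraph (k r : ℕ) :
    SimpleGraph (Fin r × Fin r ⊕ Fin r × Fin r ⊕ (Fin r × Fin r) × Fin (k + 2 - 2 * r)) :=
  incidenceGraphWithLeaves (rookIncidence r) (k + 2 - 2 * r)

namespace rookGraph

open incidenceGraphWithLeaves

lemma partDeg_inl (p : Fin r × Fin r) :
    partDeg (rookGraph k r).edgeSet (.inl p) = 2 * r - 1 := by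
  rw [incidenceGraphWithLeaves.partDeg_inl, ← ncard_setOf_fst_eq_or_snd_eq p.1 p.2]
  exact congrArg _ (Set.ext fun _ => or_congr eq_comm eq_comm)

lemma partDeg_inr_inl (hr : 0 < r) (hrk : 2 * r ≤ k + 2) (l : Fin r × Fin r) :
    partDeg (rookGraph k r).edgeSet (.inr (.inl l)) = k + 1 := by
  have hline : {p | rookIncidence r p l}.ncard = 2 * r - 1 := ncard_setOf_fst_eq_or_snd_eq l.1 l.2
  rw [incidenceGraphWithLeaves.partDeg_inr_inl, hline]
  omega

lemma exists_isKIrregularDecomposition (hr : 0 < r) (hrk : 2 * r ≤ k + 2) :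
    ∃ (t : ℕ) (P : Fin t → Set (Sym2 _)), IsKIrregularDecomposition k (rookGraph k r) P := by
  let σ := (Fintype.equivFin (Fin r × Fin r)).symm
  refine ⟨_, _, isKIrregularDecomposition_incidenceSet (fun i => .inr (.inl (σ i)))
    (fun i j h => σ.injective (by simpa using h)) (fun i j => not_adj_inr_inl _ _)
    (fun x y hxy => ?_) (fun i => (partDeg_inr_inl hr hrk _).ge)⟩
  obtain ⟨l, hl⟩ := exists_inr_inl_of_adj hxy
  exact ⟨σ.symm l, by simpa using hl⟩

lemma mul_self_le_card {ι : Type*} [Finite ι] (hr : 0 < r) (hrk : 2 * r ≤ k + 1)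
    {P : ι → Set (Sym2 _)} (hU : (⋃ i, P i) = (rookGraph k r).edgeSet)
    (hI : ∀ i, IsLocallyKIrregularPart k (P i)) : r * r ≤ Nat.card ι := by
  have := card_le_card_of_isLocallyKIrregularPart_cover (G := rookGraph k r)
    (fun l => .inr (.inl l)) (fun l l' h => by simpa using h)
    (fun l => (partDeg_inr_inl hr (by omega) l).le)
    (fun l => ⟨.inr (.inr (l, ⟨0, by omega⟩)), rfl, (partDeg_inr_inr l _).le⟩)
    (fun l l' _ => ⟨.inl (l.1, l'.2), .inl rfl, .inr rfl, (partDeg_inl _).trans_le (by omega)⟩)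
    hU hI
  simpa using this

end rookGraph

end Rook

/-- h(k) = Ω(k²): there are c > 0 and K such that for every k ≥ K some finite
graph is decomposable into locally k-irregular parts while every such decomposition of it has
at least c·k² parts. -/
theorem stmt_15 :
    ∃ c : ℝ, 0 < c ∧ ∃ K : ℕ, ∀ k : ℕ, K ≤ k →
      ∃ (n : ℕ) (G : SimpleGraph (Fin n)),
        (∃ (t : ℕ) (P : Fin t → Set (Sym2 (Fin n))),
          (⋃ i, P i) = G.edgeSet ∧
          (∀ i j, i ≠ j → Disjoint (P i) (P j)) ∧
          ∀ i, IsLocallyKIrregularPart k (P i)) ∧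
        ∀ (t : ℕ) (P : Fin t → Set (Sym2 (Fin n))),
          (⋃ i, P i) = G.edgeSet →
          (∀ i j, i ≠ j → Disjoint (P i) (P j)) →
          (∀ i, IsLocallyKIrregularPart k (P i)) →
          c * (k : ℝ) ^ 2 ≤ (t : ℝ) := by
  refine ⟨1 / 16, by norm_num, 2, fun k hk => ?_⟩
  set r := k / 2
  have hr : 0 < r := by omega
  let e := Fintype.equivFin
    (Fin r × Fin r ⊕ Fin r × Fin r ⊕ (Fin r × Fin r) × Fin (k + 2 - 2 * r))
  let φ := Iso.map e (rookGraph k r)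
  refine ⟨_, (rookGraph k r).map e.toEmbedding, ?_, fun t Q hU hD hI => ?_⟩
  · obtain ⟨t, P, hP⟩ := rookGraph.exists_isKIrregularDecomposition (k := k) hr (by omega)
    have hφP := hP.map φ
    exact ⟨t, _, hφP.iUnion_eq, hφP.pairwise_disjoint, hφP.isLocallyKIrregularPart⟩
  · have hQ := (IsKIrregularDecomposition.mk hU hD hI).map φ.symm
    have hrt : r * r ≤ t := by
      simpa using rookGraph.mul_self_le_card hr (by omega) hQ.iUnion_eq hQ.isLocallyKIrregularPart
    have hkr : (k : ℝ) ≤ 4 * r := by exact_mod_cast (by omega : k ≤ 4 * r)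
    have hrt' : (r : ℝ) * r ≤ t := by exact_mod_cast hrt
    nlinarith
end

section
/- Let G be a finite 3-regular graph. Then G has an edge-labeling ℓ : E(G) → {1,2} such that for every edge uv the sum of the labels of the edges incident to u differs from the sum of the labels of the edges incident to v, if and only if E(G) can be partitioned into at most two locally irregular parts. -/
open SimpleGraph

variable {V : Type*}

/-!
Read label 2 as membership in a part `E₂` and label 1 as membership in its complement `E₁`.
The label sum at `v` is then `deg v + d₂(v)`, while `d₁(v) = deg v - d₂(v)`. In a regular graph
all three quantities therefore separate the ends of an edge simultaneously: a labeling has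
distinct sums at the ends of every edge iff both of its label classes are locally irregular.
-/

namespace SimpleGraph

open Finset

variable {G : SimpleGraph V} [G.LocallyFinite] {E E₁ E₂ : Set (Sym2 V)}

open scoped Classical in
lemma partDeg_eq_card_filter_neighborFinset (hE : E ⊆ G.edgeSet) (u : V) :
    partDeg E u = #{w ∈ G.neighborFinset u | s(u, w) ∈ E} := by
  have hinc : {e ∈ E | u ∈ e} = Sym2.mkEmbedding u ''
      ({w ∈ G.neighborFinset u | s(u, w) ∈ E} : Finset V) := by
    ext e
    constructor
    · rintro ⟨he, hu⟩
      obtain ⟨w, rfl⟩ := Sym2.mem_iff_exists.mp hu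
      exact ⟨w, mem_filter.mpr ⟨(G.mem_neighborFinset u w).mpr (hE he), he⟩, rfl⟩
    · rintro ⟨w, hw, rfl⟩
      exact ⟨(mem_filter.mp hw).2, Sym2.mem_mk_left u w⟩
  rw [partDeg, hinc, Set.ncard_image_of_injective _ (Sym2.mkEmbedding u).injective,
    Set.ncard_coe_finset]

lemma partDeg_add_partDeg_eq_degree (hU : E₁ ∪ E₂ = G.edgeSet) (hD : Disjoint E₁ E₂) (u : V) :
    partDeg E₁ u + partDeg E₂ u = G.degree u := by
  classical
  rw [partDeg_eq_card_filter_neighborFinset (hU ▸ Set.subset_union_left),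
    partDeg_eq_card_filter_neighborFinset (hU ▸ Set.subset_union_right),
    ← card_neighborFinset_eq_degree,
    ← card_filter_add_card_filter_not (s := G.neighborFinset u) (fun w => s(u, w) ∈ E₁)]
  congr 2
  refine filter_congr fun w hw => ?_
  have huw : s(u, w) ∈ E₁ ∪ E₂ := hU ▸ G.mem_edgeSet.mpr ((G.mem_neighborFinset u w).mp hw)
  exact ⟨fun h₂ h₁ => Set.disjoint_left.mp hD h₁ h₂, huw.resolve_left⟩

lemma sum_neighborFinset_eq_degree_add_partDeg (hE : E ⊆ G.edgeSet) {ℓ : Sym2 V → ℕ}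
    (hℓ₁ : ∀ e ∈ G.edgeSet \ E, ℓ e = 1) (hℓ₂ : ∀ e ∈ E, ℓ e = 2) (u : V) :
    ∑ w ∈ G.neighborFinset u, ℓ s(u, w) = G.degree u + partDeg E u := by
  classical
  rw [partDeg_eq_card_filter_neighborFinset hE, ← card_neighborFinset_eq_degree,
    card_filter, card_eq_sum_ones, ← sum_add_distrib]
  refine sum_congr rfl fun w hw => ?_
  have huw : s(u, w) ∈ G.edgeSet := G.mem_edgeSet.mpr ((G.mem_neighborFinset u w).mp hw)
  by_cases h : s(u, w) ∈ E
  · rw [hℓ₂ _ h, if_pos h]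
  · rw [hℓ₁ _ ⟨huw, h⟩, if_neg h]

lemma isLocallyIrregularPart_and_iff_of_isRegularOfDegree {d : ℕ} (hreg : G.IsRegularOfDegree d)
    (hU : E₁ ∪ E₂ = G.edgeSet) (hD : Disjoint E₁ E₂) :
    IsLocallyIrregularPart E₁ ∧ IsLocallyIrregularPart E₂ ↔
      ∀ u v : V, G.Adj u v → partDeg E₂ u ≠ partDeg E₂ v := by
  have hdeg (w : V) : partDeg E₁ w + partDeg E₂ w = d := hreg w ▸ partDeg_add_partDeg_eq_degree hU hD w
  have hadj {u v : V} (huv : s(u, v) ∈ E₁ ∪ E₂) : G.Adj u v := G.mem_edgeSet.mp (hU ▸ huv)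
  constructor
  · rintro ⟨h₁, h₂⟩ u v huv
    rcases hU ▸ G.mem_edgeSet.mpr huv with huv | huv
    · have := h₁ u v huv
      have := hdeg u
      have := hdeg v
      omega
    · exact h₂ u v huv
  · intro h
    refine ⟨fun u v huv => ?_, fun u v huv => h u v (hadj (Or.inr huv))⟩
    have := h u v (hadj (Or.inl huv))
    have := hdeg u
    have := hdeg v
    omega

end SimpleGraph

theorem stmt_17_general {V : Type*} [Fintype V] (G : SimpleGraph V)
    [DecidableRel G.Adj] (hreg : ∀ v : V, G.degree v = 3) :
    (∃ ℓ : Sym2 V → ℕ,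
        (∀ e ∈ G.edgeSet, ℓ e = 1 ∨ ℓ e = 2) ∧
        ∀ u v : V, G.Adj u v →
          (∑ w ∈ G.neighborFinset u, ℓ s(u, w)) ≠ ∑ w ∈ G.neighborFinset v, ℓ s(v, w)) ↔
      (∃ E₁ E₂ : Set (Sym2 V),
        E₁ ∪ E₂ = G.edgeSet ∧ Disjoint E₁ E₂ ∧
        IsLocallyIrregularPart E₁ ∧ IsLocallyIrregularPart E₂) := by
  constructor
  · rintro ⟨ℓ, hlab, hsum⟩
    set E := {e ∈ G.edgeSet | ℓ e = 2}
    have hE : E ⊆ G.edgeSet := Set.sep_subset _ _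
    have hℓ₁ : ∀ e ∈ G.edgeSet \ E, ℓ e = 1 := fun e ⟨he, hne⟩ =>
      (hlab e he).resolve_right fun h => hne ⟨he, h⟩
    have hℓ₂ : ∀ e ∈ E, ℓ e = 2 := fun _ he => he.2
    refine ⟨G.edgeSet \ E, E, Set.sdiff_union_of_subset hE, Set.disjoint_sdiff_left,
      (G.isLocallyIrregularPart_and_iff_of_isRegularOfDegree hreg
        (Set.sdiff_union_of_subset hE) Set.disjoint_sdiff_left).mpr fun u v huv => ?_⟩
    have := hsum u v huv
    rw [G.sum_neighborFinset_eq_degree_add_partDeg hE hℓ₁ hℓ₂,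
      G.sum_neighborFinset_eq_degree_add_partDeg hE hℓ₁ hℓ₂, hreg, hreg] at this
    omega
  · rintro ⟨E₁, E₂, hU, hD, hirr⟩
    classical
    have hE₂ : E₂ ⊆ G.edgeSet := hU ▸ Set.subset_union_right
    let ℓ : Sym2 V → ℕ := fun e => if e ∈ E₂ then 2 else 1
    have hℓ₁ : ∀ e ∈ G.edgeSet \ E₂, ℓ e = 1 := fun _ he => if_neg he.2
    have hℓ₂ : ∀ e ∈ E₂, ℓ e = 2 := fun _ he => if_pos he
    refine ⟨ℓ, fun e _ => by by_cases he : e ∈ E₂ <;> simp [ℓ, he], fun u v huv => ?_⟩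
    have := (G.isLocallyIrregularPart_and_iff_of_isRegularOfDegree hreg hU hD).mp hirr u v huv
    rw [G.sum_neighborFinset_eq_degree_add_partDeg hE₂ hℓ₁ hℓ₂,
      G.sum_neighborFinset_eq_degree_add_partDeg hE₂ hℓ₁ hℓ₂, hreg, hreg]
    omega

/-- a finite 3-regular graph has an edge labeling from {1,2} whose incident sums
distinguish adjacent vertices iff its edge set can be partitioned into at most two locally
irregular parts. -/
theorem stmt_17 {V : Type*} [Fintype V] [DecidableEq V] (G : SimpleGraph V)
    [DecidableRel G.Adj] (hreg : ∀ v : V, G.degree v = 3) :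
    (∃ ℓ : Sym2 V → ℕ,
        (∀ e ∈ G.edgeSet, ℓ e = 1 ∨ ℓ e = 2) ∧
        ∀ u v : V, G.Adj u v →
          (∑ w ∈ G.neighborFinset u, ℓ s(u, w)) ≠ ∑ w ∈ G.neighborFinset v, ℓ s(v, w)) ↔
      (∃ E₁ E₂ : Set (Sym2 V),
        E₁ ∪ E₂ = G.edgeSet ∧ Disjoint E₁ E₂ ∧
        IsLocallyIrregularPart E₁ ∧ IsLocallyIrregularPart E₂) :=
  stmt_17_general G hreg
end
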